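/- Let (V, ω) and (V', ω') be finite-dimensional presymplectic vector spaces and Ψ : V' → V a linear map with ω'(u, v) = ω(Ψu, Ψv) for all u, v ∈ V'. Then the subspace equality Ψ(V'^{ω'}) = (Ψ(V'))^ω holds if and only if the dimension equality dim V' + dim V'^{ω'} = dim V + dim V^ω + dim(ker Ψ) + dim(ker Ψ ∩ V'^{ω'}) holds. -/
import Mathlib


open Module

/-- The `ω`-complement `W^ω = {v ∈ V | ω(v, w) = 0 for all w ∈ W}` of a subspace `W`
of a presymplectic vector space `(V, ω)`. -/
def omegaPerp {V : Type*} [AddCommGroup V] [Module ℝ V]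
    (ω : V →ₗ[ℝ] V →ₗ[ℝ] ℝ) (W : Submodule ℝ V) : Submodule ℝ V where
  carrier := {v : V | ∀ w ∈ W, ω v w = 0}
  add_mem' := by
    intro a b ha hb w hw
    simp [map_add, LinearMap.add_apply, ha w hw, hb w hw]
  zero_mem' := by
    intro w hw
    simp
  smul_mem' := by
    intro c a ha w hw
    simp [map_smul, LinearMap.smul_apply, ha w hw]

lemma mem_omegaPerp_iff {V : Type*} [AddCommGroup V] [Module ℝ V]
    (ω : V →ₗ[ℝ] V →ₗ[ℝ] ℝ) (W : Submodule ℝ V) (v : V) :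
    v ∈ omegaPerp ω W ↔ ∀ w ∈ W, ω v w = 0 := Iff.rfl

lemma omegaPerp_eq_orthogonal {V : Type*} [AddCommGroup V] [Module ℝ V]
    (ω : V →ₗ[ℝ] V →ₗ[ℝ] ℝ) (halt : ∀ v : V, ω v v = 0) (W : Submodule ℝ V) :
    omegaPerp ω W = LinearMap.BilinForm.orthogonal ω W := by
  have hr : LinearMap.IsRefl ω := LinearMap.IsAlt.isRefl halt
  ext v
  rw [mem_omegaPerp_iff, LinearMap.BilinForm.mem_orthogonal_iff]
  constructor
  · intro h n hn
    exact hr v n (h n hn)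
  · intro h n hn
    exact hr n v (h n hn)

lemma finrank_map_add_aux {M N : Type*} [AddCommGroup M] [Module ℝ M] [FiniteDimensional ℝ M]
    [AddCommGroup N] [Module ℝ N] (f : M →ₗ[ℝ] N) (p : Submodule ℝ M) :
    finrank ℝ (p.map f) + finrank ℝ (LinearMap.ker f ⊓ p : Submodule ℝ M) = finrank ℝ p := by
  have h := LinearMap.finrank_range_add_finrank_ker (f.domRestrict p)
  rw [LinearMap.range_domRestrict, LinearMap.ker_domRestrict] at h
  have hcomap : (LinearMap.ker f).comap p.subtype
      = (LinearMap.ker f ⊓ p).comap p.subtype := by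
    ext ⟨x, hx⟩
    simp [hx]
  rw [hcomap, LinearEquiv.finrank_eq (Submodule.comapSubtypeEquivOfLe
    (inf_le_right : LinearMap.ker f ⊓ p ≤ p))] at h
  exact h

/-- Let `(V, ω)` and `(V', ω')` be finite-dimensional presymplectic vector spaces and
`Ψ : V' → V` a linear map with `ω'(u, v) = ω(Ψu, Ψv)`. Then `Ψ(V'^{ω'}) = (Ψ V')^ω`
holds if and only if
`dim V' + dim V'^{ω'} = dim V + dim V^ω + dim (ker Ψ) + dim (ker Ψ ∩ V'^{ω'})`. -/
theorem stmt5 {V : Type*} [AddCommGroup V] [Module ℝ V] [FiniteDimensional ℝ V]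
    {V' : Type*} [AddCommGroup V'] [Module ℝ V'] [FiniteDimensional ℝ V']
    (ω : V →ₗ[ℝ] V →ₗ[ℝ] ℝ) (halt : ∀ v : V, ω v v = 0)
    (ω' : V' →ₗ[ℝ] V' →ₗ[ℝ] ℝ) (halt' : ∀ v : V', ω' v v = 0)
    (Ψ : V' →ₗ[ℝ] V) (hΨ : ∀ u v : V', ω' u v = ω (Ψ u) (Ψ v)) :
    (omegaPerp ω' (⊤ : Submodule ℝ V')).map Ψ = omegaPerp ω (LinearMap.range Ψ) ↔
      finrank ℝ V' + finrank ℝ (omegaPerp ω' (⊤ : Submodule ℝ V'))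
        = finrank ℝ V + finrank ℝ (omegaPerp ω (⊤ : Submodule ℝ V))
          + finrank ℝ (LinearMap.ker Ψ)
          + finrank ℝ (LinearMap.ker Ψ ⊓ omegaPerp ω' (⊤ : Submodule ℝ V') : Submodule ℝ V') := by
  have hrefl : LinearMap.IsRefl ω := LinearMap.IsAlt.isRefl halt
  -- the inclusion Ψ(rad') ⊆ (range Ψ)^ω always holds
  have hincl : (omegaPerp ω' (⊤ : Submodule ℝ V')).map Ψ ≤ omegaPerp ω (LinearMap.range Ψ) := by
    rintro _ ⟨u, hu, rfl⟩ w hw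
    obtain ⟨x, rfl⟩ := hw
    rw [← hΨ u x]
    exact hu x trivial
  -- the radical of V is contained in (range Ψ)^ω
  have hrad : omegaPerp ω (⊤ : Submodule ℝ V) ≤ omegaPerp ω (LinearMap.range Ψ) := by
    intro v hv w _
    exact hv w trivial
  have h1 := finrank_map_add_aux Ψ (omegaPerp ω' (⊤ : Submodule ℝ V'))
  have h2 : finrank ℝ (LinearMap.range Ψ) + finrank ℝ (omegaPerp ω (LinearMap.range Ψ))
      = finrank ℝ V
        + finrank ℝ (LinearMap.range Ψ ⊓ omegaPerp ω (⊤ : Submodule ℝ V) : Submodule ℝ V) := by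
    rw [omegaPerp_eq_orthogonal ω halt, omegaPerp_eq_orthogonal ω halt]
    exact LinearMap.BilinForm.finrank_add_finrank_orthogonal hrefl (LinearMap.range Ψ)
  have h3 : finrank ℝ (LinearMap.range Ψ) + finrank ℝ (LinearMap.ker Ψ) = finrank ℝ V' :=
    LinearMap.finrank_range_add_finrank_ker Ψ
  have h4 : finrank ℝ (LinearMap.range Ψ ⊓ omegaPerp ω (⊤ : Submodule ℝ V) : Submodule ℝ V)
      ≤ finrank ℝ (omegaPerp ω (⊤ : Submodule ℝ V)) :=
    Submodule.finrank_mono inf_le_right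
  have h5 : finrank ℝ ((omegaPerp ω' (⊤ : Submodule ℝ V')).map Ψ)
      ≤ finrank ℝ (omegaPerp ω (LinearMap.range Ψ)) :=
    Submodule.finrank_mono hincl
  constructor
  · intro heq
    have hradle : omegaPerp ω (⊤ : Submodule ℝ V) ≤ LinearMap.range Ψ := by
      refine le_trans (le_trans hrad heq.ge) ?_
      exact LinearMap.map_le_range
    have hi : LinearMap.range Ψ ⊓ omegaPerp ω (⊤ : Submodule ℝ V)
        = omegaPerp ω (⊤ : Submodule ℝ V) := inf_eq_right.mpr hradle
    have hm : finrank ℝ ((omegaPerp ω' (⊤ : Submodule ℝ V')).map Ψ)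
        = finrank ℝ (omegaPerp ω (LinearMap.range Ψ)) := by rw [heq]
    rw [hi] at h2
    omega
  · intro hdim
    have hle : finrank ℝ (omegaPerp ω (LinearMap.range Ψ))
        ≤ finrank ℝ ((omegaPerp ω' (⊤ : Submodule ℝ V')).map Ψ) := by omega
    exact Submodule.eq_of_le_of_finrank_le hincl hle
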